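/- On a W̄₃-manifold (M,P,g) of dimension 2n, the curvature tensor satisfies R(x,y,Pz,Pw) - R(x,y,z,w) = -(1/2n){(ψ₁-ψ₂)(A)(x,y,z,w) + (θ(Ω)/2n)(π₁-π₂)(x,y,z,w)}, where A(y,z) = (∇_y θ)z - (1/2n)θ(y)θ(z). -/

import Mathlib

open scoped BigOperators

/-- An abstract (local) model of a Riemannian almost product manifold of
dimension `n`: `V` plays the role of the module of smooth vector fields over
the commutative ℝ-algebra `C` of smooth functions, `g` is the Riemannian
metric, `P` the almost product structure, `D` the directional derivative of
functions, `bracket` the Lie bracket of vector fields, `nabla` the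
Levi-Civita connection of `g`, and `e`, `e'` a frame together with its
`g`-reciprocal frame (used to form traces `g^{ij}·`). -/
structure RAPM (n : ℕ) where
  V : Type
  C : Type
  [instAG : AddCommGroup V]
  [instCR : CommRing C]
  [instAlg : Algebra ℝ C]
  [instMod : Module C V]
  g : V →ₗ[C] V →ₗ[C] C
  P : V →ₗ[C] V
  gSymm : ∀ x y, g x y = g y x
  Pinvol : ∀ x, P (P x) = x
  Piso : ∀ x y, g (P x) (P y) = g x y
  D : V → C → C
  Dadd : ∀ x f h, D x (f + h) = D x f + D x h
  bracket : V → V → V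
  bracketD : ∀ x y f, D (bracket x y) f = D x (D y f) - D y (D x f)
  jacobi : ∀ x y z,
    bracket x (bracket y z) + bracket y (bracket z x) + bracket z (bracket x y) = 0
  nabla : V → V → V
  nabla_add₁ : ∀ x y z, nabla (x + y) z = nabla x z + nabla y z
  nabla_smul₁ : ∀ (f : C) x y, nabla (f • x) y = f • nabla x y
  nabla_add₂ : ∀ x y z, nabla x (y + z) = nabla x y + nabla x z
  nabla_leibniz : ∀ x (f : C) y, nabla x (f • y) = D x f • y + f • nabla x y
  nabla_metric : ∀ x y z, D x (g y z) = g (nabla x y) z + g y (nabla x z)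
  torsion_free : ∀ x y, nabla x y - nabla y x = bracket x y
  e : Fin n → V
  e' : Fin n → V
  dual_frame : ∀ i j, g (e' i) (e j) = if i = j then 1 else 0
  frame_span : ∀ v : V, v = ∑ i, g (e' i) v • e i

namespace RAPM

attribute [instance] RAPM.instAG RAPM.instCR RAPM.instAlg RAPM.instMod

variable {n : ℕ} (Q : RAPM n)

/-- The fundamental tensor `F(x,y,z) = g((∇ₓP)y, z)`. -/
def F (x y z : Q.V) : Q.C := Q.g (Q.nabla x (Q.P y) - Q.P (Q.nabla x y)) z

/-- The curvature operator `R(x,y)z`. -/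
def R (x y z : Q.V) : Q.V :=
  Q.nabla x (Q.nabla y z) - Q.nabla y (Q.nabla x z) - Q.nabla (Q.bracket x y) z

/-- The (0,4) curvature tensor `R(x,y,z,w) = g(R(x,y)z, w)`. -/
def Rm (x y z w : Q.V) : Q.C := Q.g (Q.R x y z) w

/-- `tr P = g^{ij} g(e_i, P e_j)`. -/
def trP : Q.C := ∑ i, Q.g (Q.e' i) (Q.P (Q.e i))

/-- The Lee form `θ(x) = g^{ij} F(e_i, e_j, x)`. -/
def theta (x : Q.V) : Q.C := ∑ i, Q.F (Q.e' i) (Q.e i) x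

/-- The covariant derivative `(∇ₓθ)y`. -/
def nablaTheta (x y : Q.V) : Q.C := Q.D x (Q.theta y) - Q.theta (Q.nabla x y)

/-- `θ` is closed iff `(∇ₓθ)y = (∇_yθ)x`. -/
def closed : Prop := ∀ x y, Q.nablaTheta x y = Q.nablaTheta y x

/-- The covariant derivative `(∇ₓF)(y,z,w)`. -/
def nablaF (x y z w : Q.V) : Q.C :=
  Q.D x (Q.F y z w) - Q.F (Q.nabla x y) z w - Q.F y (Q.nabla x z) w
    - Q.F y z (Q.nabla x w)

def psi1 (S : Q.V → Q.V → Q.C) (x y z w : Q.V) : Q.C :=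
  Q.g y z * S x w - Q.g x z * S y w + S y z * Q.g x w - S x z * Q.g y w

def psi2 (S : Q.V → Q.V → Q.C) (x y z w : Q.V) : Q.C :=
  Q.psi1 S x y (Q.P z) (Q.P w)

/-- The associated metric `g̃(x,y) = g(x,Py)`. -/
def gP (x y : Q.V) : Q.C := Q.g x (Q.P y)

noncomputable def pi1 (x y z w : Q.V) : Q.C :=
  ((1 : ℝ)/2) • Q.psi1 (fun a b => Q.g a b) x y z w

noncomputable def pi2 (x y z w : Q.V) : Q.C :=
  ((1 : ℝ)/2) • Q.psi2 (fun a b => Q.g a b) x y z w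

def pi3 (x y z w : Q.V) : Q.C := Q.psi1 Q.gP x y z w

/-- The Ricci tensor `ρ(L)(y,z) = g^{ij} L(e_i,y,z,e_j)` of a (0,4)-tensor. -/
def ric (L : Q.V → Q.V → Q.V → Q.V → Q.C) (y z : Q.V) : Q.C :=
  ∑ i, L (Q.e' i) y z (Q.e i)

/-- The scalar curvature `τ(L) = g^{ij} ρ(L)(e_i,e_j)`. -/
def scal (L : Q.V → Q.V → Q.V → Q.V → Q.C) : Q.C := ∑ i, Q.ric L (Q.e i) (Q.e' i)

/-- The associated Ricci tensor `ρ*(L)(y,z) = g^{ij} L(e_i,y,z,Pe_j)`. -/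
def ricStar (L : Q.V → Q.V → Q.V → Q.V → Q.C) (y z : Q.V) : Q.C :=
  ∑ i, L (Q.e' i) y z (Q.P (Q.e i))

/-- The associated scalar curvature `τ*(L)`. -/
def scalStar (L : Q.V → Q.V → Q.V → Q.V → Q.C) : Q.C :=
  ∑ i, Q.ricStar L (Q.e i) (Q.e' i)

/-- The trace `g^{ij} S(e_i,e_j)` of a (0,2)-tensor. -/
def trB (S : Q.V → Q.V → Q.C) : Q.C := ∑ i, S (Q.e i) (Q.e' i)

/-- The divergence of a vector field. -/
def divg (v : Q.V) : Q.C := ∑ i, Q.g (Q.e' i) (Q.nabla (Q.e i) v)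

/-- A curvature-like tensor. -/
def curvatureLike (L : Q.V → Q.V → Q.V → Q.V → Q.C) : Prop :=
  (∀ x y z w, L x y z w = - L y x z w) ∧
  (∀ x y z w, L x y z w = - L x y w z) ∧
  (∀ x y z w, L x y z w + L y z x w + L z x y w = 0)

/-- A Riemannian P-tensor. -/
def isPtensor (L : Q.V → Q.V → Q.V → Q.V → Q.C) : Prop :=
  Q.curvatureLike L ∧ ∀ x y z w, L x y (Q.P z) (Q.P w) = L x y z w

/-- The defining condition of the Naveira class `W̄₃` (dimension `n`, so the
factor `1/(2n)` of the paper is `1/n` here). -/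
def W3 : Prop :=
  (∀ x y z, Q.F x y z =
    ((1 : ℝ)/(n : ℝ)) • ((Q.g x y + Q.g x (Q.P y)) * Q.theta z +
      (Q.g x z + Q.g x (Q.P z)) * Q.theta y)) ∧
  (∀ x, Q.theta (Q.P x) = - Q.theta x)

/-- The defining condition of the Naveira class `W̄₆`. -/
def W6 : Prop :=
  (∀ x y z, Q.F x y z =
    ((1 : ℝ)/(n : ℝ)) • ((Q.g x y - Q.g x (Q.P y)) * Q.theta z +
      (Q.g x z - Q.g x (Q.P z)) * Q.theta y)) ∧
  (∀ x, Q.theta (Q.P x) = Q.theta x)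

end RAPM

/-! On a `W̄₃`-manifold the covariant derivative of `P` is an explicit expression in `g`, `P` and
the vector field `Ω` dual to `θ`, so differentiating once more writes `∇F` through `θ`, `∇θ`
and `F`. The Ricci identity for `P` expresses `R(x,y,Pz,Pw) - R(x,y,z,w)` as the
antisymmetrisation `(∇ₓF)(y,z,Pw) - (∇_yF)(x,z,Pw)`; substituting the formula for `∇F`, with
`θ ∘ P = -θ` and the identity `(∇ₓθ)(Py) = -(∇ₓθ)y - (1/2n)(g(x,y) + g(x,Py)) θ(Ω)`, leaves
exactly the combination of `ψ₁ - ψ₂` and `π₁ - π₂` in the statement. -/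

namespace RAPM

variable {m : ℕ} (Q : RAPM m)

theorem g_P_comm (x y : Q.V) : Q.g x (Q.P y) = Q.g y (Q.P x) := by
  rw [← Q.Piso y (Q.P x), Q.Pinvol]
  exact Q.gSymm _ _

theorem eq_of_forall_g_eq {v v' : Q.V} (h : ∀ u, Q.g u v = Q.g u v') : v = v' := by
  rw [Q.frame_span v, Q.frame_span v']
  simp only [h]

def DAddHom (x : Q.V) : Q.C →+ Q.C := AddMonoidHom.mk' (Q.D x) (Q.Dadd x)

def nablaAddHom (x : Q.V) : Q.V →+ Q.V := AddMonoidHom.mk' (Q.nabla x) (Q.nabla_add₂ x)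

def nablaAddHomLeft (z : Q.V) : Q.V →+ Q.V :=
  AddMonoidHom.mk' (fun x => Q.nabla x z) (fun x y => Q.nabla_add₁ x y z)

theorem D_neg (x : Q.V) (c : Q.C) : Q.D x (-c) = -Q.D x c := (Q.DAddHom x).map_neg c

theorem nabla_sub_left (x y z : Q.V) : Q.nabla (x - y) z = Q.nabla x z - Q.nabla y z :=
  (Q.nablaAddHomLeft z).map_sub x y

theorem nabla_sub_right (x y z : Q.V) : Q.nabla x (y - z) = Q.nabla x y - Q.nabla x z :=
  (Q.nablaAddHom x).map_sub y z

theorem D_one (hm : 0 < m) (x : Q.V) : Q.D x 1 = 0 := by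
  let i : Fin m := ⟨0, hm⟩
  have h := Q.nabla_leibniz x 1 (Q.e i)
  rw [one_smul, one_smul, right_eq_add] at h
  simpa [Q.dual_frame] using congrArg (Q.g (Q.e' i)) h

-- `D x` is only known to be additive, so a constant is killed through `k • (1/k) = 1`.
theorem D_algebraMap_one_div_natCast (hm : 0 < m) (x : Q.V) (k : ℕ) :
    Q.D x (algebraMap ℝ Q.C (1 / k)) = 0 := by
  rcases eq_or_ne k 0 with rfl | hk
  · rw [Nat.cast_zero, div_zero, map_zero]
    exact (Q.DAddHom x).map_zero
  have hk' : (k : ℝ) ≠ 0 := Nat.cast_ne_zero.mpr hk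
  have hinv : k • algebraMap ℝ Q.C (1 / k) = 1 := by
    rw [← map_nsmul, nsmul_eq_mul, mul_one_div_cancel hk', map_one]
  have h : (k : ℝ) • Q.D x (algebraMap ℝ Q.C (1 / k)) = 0 := by
    rw [Nat.cast_smul_eq_nsmul]
    calc k • Q.D x (algebraMap ℝ Q.C (1 / k))
        = Q.D x (k • algebraMap ℝ Q.C (1 / k)) := ((Q.DAddHom x).map_nsmul k _).symm
      _ = 0 := by rw [hinv, Q.D_one hm x]
  exact (smul_eq_zero.mp h).resolve_left hk'

def nablaP (x y : Q.V) : Q.V := Q.nabla x (Q.P y) - Q.P (Q.nabla x y)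

/-- `(∇²_{x,y}P)z = (∇ₓ(∇P))(y,z)`. -/
def nabla2P (x y z : Q.V) : Q.V :=
  Q.nabla x (Q.nablaP y z) - Q.nablaP (Q.nabla x y) z - Q.nablaP y (Q.nabla x z)

theorem F_eq_g_nablaP (x y z : Q.V) : Q.F x y z = Q.g (Q.nablaP x y) z := rfl

theorem nablaF_eq_g_nabla2P (x y z w : Q.V) : Q.nablaF x y z w = Q.g (Q.nabla2P x y z) w := by
  simp only [nablaF, F_eq_g_nablaP, nabla2P, Q.nabla_metric, map_sub, LinearMap.sub_apply]
  ring

theorem nabla2P_sub_nabla2P_swap (x y z : Q.V) :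
    Q.nabla2P x y z - Q.nabla2P y x z = Q.R x y (Q.P z) - Q.P (Q.R x y z) := by
  simp only [nabla2P, nablaP, R, ← Q.torsion_free x y, nabla_sub_left, nabla_sub_right, map_sub]
  abel

theorem Rm_P_P_sub_Rm (x y z w : Q.V) :
    Q.Rm x y (Q.P z) (Q.P w) - Q.Rm x y z w = Q.nablaF x y z (Q.P w) - Q.nablaF y x z (Q.P w) := by
  rw [nablaF_eq_g_nabla2P, nablaF_eq_g_nabla2P, ← LinearMap.sub_apply, ← map_sub,
    nabla2P_sub_nabla2P_swap, map_sub, LinearMap.sub_apply, Q.Piso]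
  rfl

theorem nablaTheta_eq_g_nabla {Ω : Q.V} (hΩ : ∀ x, Q.g Ω x = Q.theta x) (x y : Q.V) :
    Q.nablaTheta x y = Q.g (Q.nabla x Ω) y := by
  simp only [nablaTheta, ← hΩ, Q.nabla_metric]
  ring

theorem pi1_eq (x y z w : Q.V) : Q.pi1 x y z w = Q.g y z * Q.g x w - Q.g x z * Q.g y w := by
  have h : Q.psi1 (fun a b => Q.g a b) x y z w =
      (2 : ℝ) • (Q.g y z * Q.g x w - Q.g x z * Q.g y w) := by
    rw [psi1, two_smul]
    ring
  rw [pi1, h, smul_smul]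
  norm_num

theorem pi2_eq (x y z w : Q.V) :
    Q.pi2 x y z w = Q.g y (Q.P z) * Q.g x (Q.P w) - Q.g x (Q.P z) * Q.g y (Q.P w) :=
  Q.pi1_eq x y (Q.P z) (Q.P w)

section W3

/-- The factor `1/(2n)` of the paper (`m = 2n`), as a constant function. -/
noncomputable def invDim : Q.C := algebraMap ℝ Q.C (1 / m)

theorem D_invDim (hm : 0 < m) (x : Q.V) : Q.D x Q.invDim = 0 :=
  Q.D_algebraMap_one_div_natCast hm x m

theorem nabla_invDim_smul (hm : 0 < m) (x v : Q.V) :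
    Q.nabla x (Q.invDim • v) = Q.invDim • Q.nabla x v := by
  rw [Q.nabla_leibniz, Q.D_invDim hm, zero_smul, zero_add]

variable {Q} (hW : Q.W3) {Ω : Q.V} (hΩ : ∀ x, Q.g Ω x = Q.theta x)
include hW

theorem W3.F_eq (x y z : Q.V) :
    Q.F x y z = Q.invDim *
      ((Q.g x y + Q.g x (Q.P y)) * Q.theta z + (Q.g x z + Q.g x (Q.P z)) * Q.theta y) := by
  rw [hW.1, Algebra.smul_def]
  rfl

include hΩ

theorem W3.nablaP_eq (x y : Q.V) :
    Q.nablaP x y = Q.invDim • ((Q.g x y + Q.g x (Q.P y)) • Ω + Q.theta y • (x + Q.P x)) := by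
  refine Q.eq_of_forall_g_eq fun u => ?_
  rw [Q.gSymm u, ← F_eq_g_nablaP, hW.F_eq]
  simp only [map_add, map_smul, smul_eq_mul]
  rw [Q.gSymm u Ω, hΩ, Q.g_P_comm u x, Q.gSymm u x]
  ring

theorem W3.nablaTheta_P (x y : Q.V) :
    Q.nablaTheta x (Q.P y) =
      -Q.nablaTheta x y - Q.invDim * ((Q.g x y + Q.g x (Q.P y)) * Q.theta Ω) := by
  have hF : Q.theta (Q.nablaP x y) = Q.invDim * ((Q.g x y + Q.g x (Q.P y)) * Q.theta Ω) := by
    rw [← hΩ, Q.gSymm, ← F_eq_g_nablaP, hW.F_eq, Q.gSymm x Ω, hΩ, Q.g_P_comm x Ω, hΩ, hW.2]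
    ring
  have hsplit : Q.nabla x (Q.P y) = Q.nablaP x y + Q.P (Q.nabla x y) := by
    rw [nablaP, sub_add_cancel]
  rw [nablaTheta, nablaTheta, hW.2, Q.D_neg, hsplit, ← hΩ (_ + _), map_add, hΩ, hΩ, hF, hW.2]
  ring

theorem W3.nabla2P_eq (hm : 0 < m) (x y z : Q.V) :
    Q.nabla2P x y z = Q.invDim • (Q.F x z y • Ω + (Q.g y z + Q.g y (Q.P z)) • Q.nabla x Ω +
      Q.nablaTheta x z • (y + Q.P y) + Q.theta z • Q.nablaP x y) := by
  rw [nabla2P, hW.nablaP_eq hΩ y z, hW.nablaP_eq hΩ (Q.nabla x y) z,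
    hW.nablaP_eq hΩ y (Q.nabla x z), Q.nabla_invDim_smul hm, Q.nabla_add₂, Q.nabla_leibniz,
    Q.nabla_leibniz, Q.Dadd, Q.nabla_metric, Q.nabla_metric, Q.nabla_add₂ x y (Q.P y),
    Q.nablaTheta_eq_g_nabla hΩ, F_eq_g_nablaP, nablaP, nablaP]
  simp only [← hΩ, Q.nabla_metric, map_sub, LinearMap.sub_apply, Q.gSymm _ y]
  match_scalars <;> ring

theorem W3.nablaF_eq (hm : 0 < m) (x y z w : Q.V) :
    Q.nablaF x y z w = Q.invDim * (Q.F x z y * Q.theta w +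
      (Q.g y z + Q.g y (Q.P z)) * Q.nablaTheta x w +
      Q.nablaTheta x z * (Q.g y w + Q.g y (Q.P w)) + Q.theta z * Q.F x y w) := by
  rw [nablaF_eq_g_nabla2P, hW.nabla2P_eq hΩ hm]
  simp only [map_add, map_smul, LinearMap.add_apply, LinearMap.smul_apply, smul_eq_mul]
  rw [hΩ, ← Q.nablaTheta_eq_g_nabla hΩ, Q.gSymm (Q.P y) w, Q.g_P_comm w y, ← F_eq_g_nablaP]

theorem W3.Rm_P_P_sub_Rm (hm : 0 < m) (A : Q.V → Q.V → Q.C)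
    (hA : ∀ y z, A y z = Q.nablaTheta y z - ((1 : ℝ) / m) • (Q.theta y * Q.theta z))
    (x y z w : Q.V) :
    Q.Rm x y (Q.P z) (Q.P w) - Q.Rm x y z w =
      -(((1 : ℝ) / m) • (Q.psi1 A x y z w - Q.psi2 A x y z w +
        ((1 : ℝ) / m) • (Q.theta Ω * (Q.pi1 x y z w - Q.pi2 x y z w)))) := by
  have hκ : algebraMap ℝ Q.C (1 / m) = Q.invDim := rfl
  simp only [Algebra.smul_def, hκ] at hA ⊢
  rw [Q.Rm_P_P_sub_Rm, hW.nablaF_eq hΩ hm, hW.nablaF_eq hΩ hm, psi2, psi1, psi1, pi1_eq,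
    pi2_eq]
  simp only [hA]
  rw [hW.F_eq x z y, hW.F_eq x y (Q.P w), hW.F_eq y z x, hW.F_eq y x (Q.P w), Q.Pinvol,
    hW.2 w, hW.2 z, hW.nablaTheta_P hΩ x w, hW.nablaTheta_P hΩ y w, hW.nablaTheta_P hΩ x z,
    hW.nablaTheta_P hΩ y z, Q.gSymm y x, Q.g_P_comm y x]
  ring

end W3

end RAPM

open RAPM in
theorem statement9_general {n : ℕ} (hn : 0 < n) (Q : RAPM (2*n))
    (hW : Q.W3) (Ω : Q.V) (hΩ : ∀ x, Q.g Ω x = Q.theta x)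
    (A : Q.V → Q.V → Q.C)
    (hA : ∀ y z, A y z =
      Q.nablaTheta y z - ((1 : ℝ)/(2*(n : ℝ))) • (Q.theta y * Q.theta z)) :
    ∀ x y z w, Q.Rm x y (Q.P z) (Q.P w) - Q.Rm x y z w =
      - (((1 : ℝ)/(2*(n : ℝ))) •
        (Q.psi1 A x y z w - Q.psi2 A x y z w +
          ((1 : ℝ)/(2*(n : ℝ))) •
            (Q.theta Ω * (Q.pi1 x y z w - Q.pi2 x y z w)))) := by
  have hdim : ((2 * n : ℕ) : ℝ) = 2 * (n : ℝ) := by push_cast; rfl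
  have key := hW.Rm_P_P_sub_Rm hΩ (by omega) A (by rwa [hdim])
  rwa [hdim] at key

open RAPM in
/-- On a `W̄₃`-manifold of dimension `2n`:
`R(x,y,Pz,Pw) - R(x,y,z,w)
  = -(1/2n){(ψ₁-ψ₂)(A) + (θ(Ω)/2n)(π₁-π₂)}`. -/
theorem statement9 {n : ℕ} (hn : 0 < n) (Q : RAPM (2*n)) (htr : Q.trP = 0)
    (hW : Q.W3) (Ω : Q.V) (hΩ : ∀ x, Q.g Ω x = Q.theta x)
    (A : Q.V → Q.V → Q.C)
    (hA : ∀ y z, A y z =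
      Q.nablaTheta y z - ((1 : ℝ)/(2*(n : ℝ))) • (Q.theta y * Q.theta z)) :
    ∀ x y z w, Q.Rm x y (Q.P z) (Q.P w) - Q.Rm x y z w =
      - (((1 : ℝ)/(2*(n : ℝ))) •
        (Q.psi1 A x y z w - Q.psi2 A x y z w +
          ((1 : ℝ)/(2*(n : ℝ))) •
            (Q.theta Ω * (Q.pi1 x y z w - Q.pi2 x y z w)))) :=
  statement9_general hn Q hW Ω hΩ A hA
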